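/- Let x, y_1, ..., y_n be vectors in an inner product space (H, ⟨·,·⟩) over the real or complex field with not all ⟨x, y_k⟩ = 0, and let p > 1, q > 1 with 1/p + 1/q = 1. Then ( ∑_{k=1}^n |⟨x, y_k⟩|² )² / [ ( ∑_{k=1}^n |⟨x, y_k⟩| ) · ( ∑_{k=1}^n |⟨x, y_k⟩|^p )^{1/p} ] ≤ ‖x‖² · max_{1≤i≤n} { ( ∑_{j=1}^n |⟨y_i, y_j⟩|^q )^{1/q} }. -/

import Mathlib

/-! With `c k = conj ⟪x, y k⟫` and `v = ∑ k, c k • y k` one has `⟪x, v⟫ = ∑ k, |⟪x, y k⟫|²`, so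
Cauchy–Schwarz gives `(∑ k, |⟪x, y k⟫|²)² ≤ ‖x‖² ‖v‖²`. Expanding `‖v‖²` and applying the triangle
inequality bounds it by `∑ i, |c i| ∑ j, |c j| |⟪y i, y j⟫|`; Hölder's inequality on each inner sum
bounds that by `(∑ k, |c k|) (∑ k, |c k|^p)^(1/p)` times the largest `ℓ^q` norm of a row of the Gram
matrix. -/

open Finset

section InnerProductSpace

variable {𝕜 H ι : Type*} [RCLike 𝕜] [NormedAddCommGroup H] [InnerProductSpace 𝕜 H] [Fintype ι]

lemma norm_sum_smul_sq_le (c : ι → 𝕜) (y : ι → H) :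
    ‖∑ k, c k • y k‖ ^ 2 ≤ ∑ i, ‖c i‖ * ∑ j, ‖c j‖ * ‖(inner 𝕜 (y i) (y j) : 𝕜)‖ := by
  have h_expand : (inner 𝕜 (∑ k, c k • y k) (∑ k, c k • y k) : 𝕜) =
      ∑ i, ∑ j, starRingEnd 𝕜 (c i) * (c j * inner 𝕜 (y i) (y j)) := by
    rw [sum_inner]
    refine sum_congr rfl fun i _ => ?_
    rw [inner_smul_left, inner_sum, mul_sum]
    simp only [inner_smul_right]
  calc ‖∑ k, c k • y k‖ ^ 2 = ‖(inner 𝕜 (∑ k, c k • y k) (∑ k, c k • y k) : 𝕜)‖ := by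
        rw [inner_self_eq_norm_sq_to_K, norm_pow, RCLike.norm_ofReal, abs_norm]
    _ ≤ ∑ i, ∑ j, ‖starRingEnd 𝕜 (c i) * (c j * inner 𝕜 (y i) (y j))‖ := by
        rw [h_expand]
        exact (norm_sum_le _ _).trans (sum_le_sum fun i _ => norm_sum_le _ _)
    _ = ∑ i, ‖c i‖ * ∑ j, ‖c j‖ * ‖(inner 𝕜 (y i) (y j) : 𝕜)‖ := by
        simp only [norm_mul, RCLike.norm_conj, mul_sum]

lemma inner_sum_conj_inner_smul (x : H) (y : ι → H) :
    (inner 𝕜 x (∑ k, starRingEnd 𝕜 (inner 𝕜 x (y k)) • y k) : 𝕜) =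
      ((∑ k, ‖(inner 𝕜 x (y k) : 𝕜)‖ ^ 2 : ℝ) : 𝕜) := by
  push_cast
  simp only [inner_sum, inner_smul_right, RCLike.conj_mul]

lemma sq_sum_norm_inner_sq_le (x : H) (y : ι → H) :
    (∑ k, ‖(inner 𝕜 x (y k) : 𝕜)‖ ^ 2) ^ 2 ≤
      ‖x‖ ^ 2 * ∑ i, ‖(inner 𝕜 x (y i) : 𝕜)‖ *
        ∑ j, ‖(inner 𝕜 x (y j) : 𝕜)‖ * ‖(inner 𝕜 (y i) (y j) : 𝕜)‖ := by
  set v := ∑ k, starRingEnd 𝕜 (inner 𝕜 x (y k)) • y k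
  have h_inner : ‖(inner 𝕜 x v : 𝕜)‖ = ∑ k, ‖(inner 𝕜 x (y k) : 𝕜)‖ ^ 2 := by
    rw [inner_sum_conj_inner_smul, RCLike.norm_ofReal, abs_of_nonneg (by positivity)]
  have h_norm := norm_sum_smul_sq_le (fun k => starRingEnd 𝕜 (inner 𝕜 x (y k))) y
  simp only [RCLike.norm_conj] at h_norm
  calc (∑ k, ‖(inner 𝕜 x (y k) : 𝕜)‖ ^ 2) ^ 2 ≤ (‖x‖ * ‖v‖) ^ 2 := by
        rw [← h_inner]
        exact pow_le_pow_left₀ (norm_nonneg _) (norm_inner_le_norm x v) 2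
    _ ≤ _ := by
        rw [mul_pow]
        exact mul_le_mul_of_nonneg_left h_norm (sq_nonneg _)

end InnerProductSpace

lemma sum_mul_sum_mul_le_of_rowwise_holder {ι : Type*} [Fintype ι] {a : ι → ℝ} {b : ι → ι → ℝ}
    (ha : ∀ i, 0 ≤ a i) (hb : ∀ i j, 0 ≤ b i j) {p q M : ℝ} (hpq : p.HolderConjugate q)
    (hM : ∀ i, (∑ j, b i j ^ q) ^ (1 / q) ≤ M) :
    ∑ i, a i * ∑ j, a j * b i j ≤ (∑ i, a i) * ((∑ j, a j ^ p) ^ (1 / p) * M) := by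
  rw [sum_mul]
  refine sum_le_sum fun i _ => mul_le_mul_of_nonneg_left ?_ (ha i)
  calc ∑ j, a j * b i j ≤ (∑ j, a j ^ p) ^ (1 / p) * (∑ j, b i j ^ q) ^ (1 / q) :=
        Real.inner_le_Lp_mul_Lq_of_nonneg univ hpq (fun j _ => ha j) (fun j _ => hb i j)
    _ ≤ (∑ j, a j ^ p) ^ (1 / p) * M :=
        mul_le_mul_of_nonneg_left (hM i)
          (Real.rpow_nonneg (sum_nonneg fun j _ => Real.rpow_nonneg (ha j) p) _)

theorem dragomir_bessel_pq_bound_general {𝕜 H : Type*} [RCLike 𝕜] [NormedAddCommGroup H]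
    [InnerProductSpace 𝕜 H] {n : ℕ} (hn : 0 < n) (x : H) (y : Fin n → H)
    {p q : ℝ} (hp : 1 < p)
    (hpq : 1 / p + 1 / q = 1) :
    (∑ k, ‖(inner 𝕜 x (y k) : 𝕜)‖ ^ 2) ^ 2 /
        ((∑ k, ‖(inner 𝕜 x (y k) : 𝕜)‖) * (∑ k, ‖(inner 𝕜 x (y k) : 𝕜)‖ ^ p) ^ (1 / p)) ≤
      ‖x‖ ^ 2 *
        Finset.univ.sup' (Finset.univ_nonempty_iff.mpr (Fin.pos_iff_nonempty.mp hn))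
          (fun i => (∑ j, ‖(inner 𝕜 (y i) (y j) : 𝕜)‖ ^ q) ^ (1 / q)) := by
  have hpq' : p.HolderConjugate q :=
    Real.holderConjugate_iff.mpr ⟨hp, by simpa only [one_div] using hpq⟩
  set M := Finset.univ.sup' (Finset.univ_nonempty_iff.mpr (Fin.pos_iff_nonempty.mp hn))
    (fun i => (∑ j, ‖(inner 𝕜 (y i) (y j) : 𝕜)‖ ^ q) ^ (1 / q))
  have hM_nonneg : 0 ≤ M :=
    (by positivity : (0 : ℝ) ≤ _).trans (le_sup' _ (mem_univ ⟨0, hn⟩))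
  refine div_le_of_le_mul₀ (by positivity) (by positivity) ?_
  calc _ ≤ _ := sq_sum_norm_inner_sq_le x y
    _ ≤ ‖x‖ ^ 2 * ((∑ k, ‖(inner 𝕜 x (y k) : 𝕜)‖) *
          ((∑ k, ‖(inner 𝕜 x (y k) : 𝕜)‖ ^ p) ^ (1 / p) * M)) := by
        gcongr
        exact sum_mul_sum_mul_le_of_rowwise_holder (fun _ => norm_nonneg _)
          (fun _ _ => norm_nonneg _) hpq' fun i =>
          le_sup' (fun i => (∑ j, ‖(inner 𝕜 (y i) (y j) : 𝕜)‖ ^ q) ^ (1 / q)) (mem_univ i)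
    _ = _ := by ring

theorem dragomir_bessel_pq_bound {𝕜 H : Type*} [RCLike 𝕜] [NormedAddCommGroup H]
    [InnerProductSpace 𝕜 H] {n : ℕ} (hn : 0 < n) (x : H) (y : Fin n → H)
    (hx : ∃ k, (inner 𝕜 x (y k) : 𝕜) ≠ 0) {p q : ℝ} (hp : 1 < p) (hq : 1 < q)
    (hpq : 1 / p + 1 / q = 1) :
    (∑ k, ‖(inner 𝕜 x (y k) : 𝕜)‖ ^ 2) ^ 2 /
        ((∑ k, ‖(inner 𝕜 x (y k) : 𝕜)‖) * (∑ k, ‖(inner 𝕜 x (y k) : 𝕜)‖ ^ p) ^ (1 / p)) ≤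
      ‖x‖ ^ 2 *
        Finset.univ.sup' (Finset.univ_nonempty_iff.mpr (Fin.pos_iff_nonempty.mp hn))
          (fun i => (∑ j, ‖(inner 𝕜 (y i) (y j) : 𝕜)‖ ^ q) ^ (1 / q)) :=
  dragomir_bessel_pq_bound_general hn x y hp hpq
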